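/- In the multi-area nested-error matrix model, for an area d, a sampled unit i of area d with standard basis vector a_{di} ∈ ℝ^n and covariate x_{di} (the corresponding row of X_s), and any x_{dj} ∈ ℝ^p with b_{dj} = V_s^{-1}X_sQ_sx_{dj} + σu² P_s Z_s m_d, the following two identities hold: (1) a_{di}' V_s a_{di} = σu² + σe²; (2) b_{dj}' V_s a_{di} = σu² + (x_{dj} − γ_d x̄_{ds})' Q_s x_{di}, where γ_d = σu²/(σu² + σe²/n_d) and x̄_{ds} is the average of the covariate vectors of the sampled units of area d. -/

import Mathlib

/-! The covariance `V = σu² Z Zᵀ + σe² I` is symmetric positive definite, and the area indicator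
`u = Z m_d` is an eigenvector of it: `V u = (σu² n_d + σe²) u`, so `V⁻¹ u = u / (σu² n_d + σe²)`.
Pairing with `V a_{di}` cancels every `V⁻¹` adjacent to `V`, which leaves
`b' V a = x_{dj}' Q x_{di} + σu² (1 - (Xᵀ V⁻¹ u)' Q x_{di})`, and `Xᵀ u = n_d x̄_d` turns the last
term into `γ_d x̄_d' Q x_{di}` because `σu² n_d / (σu² n_d + σe²) = γ_d`. -/

open Matrix Finset

section GeneralizedLeastSquares

variable {ι κ R : Type*} [Fintype ι] [Fintype κ] [CommRing R]

theorem Matrix.IsSymm.dotProduct_mulVec_comm {V : Matrix ι ι R} (hV : V.IsSymm)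
    (v w : ι → R) : v ⬝ᵥ V *ᵥ w = V *ᵥ v ⬝ᵥ w := by
  rw [dotProduct_mulVec, ← vecMul_transpose, hV.eq]

theorem Matrix.mulVec_dotProduct_eq_dotProduct_transpose_mulVec (A : Matrix ι κ R)
    (x : κ → R) (y : ι → R) : A *ᵥ x ⬝ᵥ y = x ⬝ᵥ Aᵀ *ᵥ y := by
  rw [dotProduct_mulVec, vecMul_transpose]

omit [Fintype κ] in
theorem Matrix.IsSymm.transpose_mul_mul {M : Matrix ι ι R} (hM : M.IsSymm) (X : Matrix ι κ R) :
    (Xᵀ * M * X).IsSymm := by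
  rw [IsSymm, transpose_mul, transpose_mul, transpose_transpose, hM.eq, Matrix.mul_assoc]

theorem Matrix.IsSymm.inv_mulVec_dotProduct_mulVec [DecidableEq ι] {V : Matrix ι ι R}
    (hV : V.IsSymm) (hdet : IsUnit V.det) (v a : ι → R) : V⁻¹ *ᵥ v ⬝ᵥ V *ᵥ a = v ⬝ᵥ a := by
  rw [hV.dotProduct_mulVec_comm, mulVec_mulVec, mul_nonsing_inv _ hdet, one_mulVec]

theorem Matrix.IsSymm.gls_mulVec_dotProduct_mulVec [DecidableEq ι] {V : Matrix ι ι R}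
    (hV : V.IsSymm) (hdet : IsUnit V.det) (X : Matrix ι κ R) {Q : Matrix κ κ R} (hQ : Q.IsSymm)
    (x : κ → R) (a : ι → R) : (V⁻¹ * X * Q) *ᵥ x ⬝ᵥ V *ᵥ a = x ⬝ᵥ Q *ᵥ (Xᵀ *ᵥ a) := by
  rw [← mulVec_mulVec, ← mulVec_mulVec, hV.inv_mulVec_dotProduct_mulVec hdet,
    mulVec_dotProduct_eq_dotProduct_transpose_mulVec,
    mulVec_dotProduct_eq_dotProduct_transpose_mulVec, hQ.eq]

theorem Matrix.IsSymm.gls_projection_mulVec_dotProduct_mulVec [DecidableEq ι] {V : Matrix ι ι R}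
    (hV : V.IsSymm) (hdet : IsUnit V.det) (X : Matrix ι κ R) {Q : Matrix κ κ R}
    (hQ : Q.IsSymm) (u a : ι → R) :
    (V⁻¹ - V⁻¹ * X * Q * Xᵀ * V⁻¹) *ᵥ u ⬝ᵥ V *ᵥ a
      = u ⬝ᵥ a - Xᵀ *ᵥ (V⁻¹ *ᵥ u) ⬝ᵥ Q *ᵥ (Xᵀ *ᵥ a) := by
  rw [sub_mulVec, sub_dotProduct, hV.inv_mulVec_dotProduct_mulVec hdet, ← mulVec_mulVec,
    ← mulVec_mulVec, hV.gls_mulVec_dotProduct_mulVec hdet X hQ]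

end GeneralizedLeastSquares

theorem Matrix.inv_mulVec_eq_inv_smul_of_mulVec_eq_smul {ι K : Type*} [Fintype ι]
    [DecidableEq ι] [Field K] {V : Matrix ι ι K} (hdet : IsUnit V.det) {c : K} (hc : c ≠ 0)
    {u : ι → K} (hu : V *ᵥ u = c • u) : V⁻¹ *ᵥ u = c⁻¹ • u :=
  calc V⁻¹ *ᵥ u = V⁻¹ *ᵥ (V *ᵥ (c⁻¹ • u)) := by
        rw [mulVec_smul, hu, smul_smul, inv_mul_cancel₀ hc, one_smul]
    _ = c⁻¹ • u := by rw [mulVec_mulVec, nonsing_inv_mul _ hdet, one_mulVec]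

section NestedErrorCovariance

variable {ι κ : Type*} [Fintype ι] [DecidableEq ι] [Fintype κ]

omit [Fintype ι] in
theorem Matrix.isSymm_smul_mul_transpose_add_smul_one {R : Type*} [CommRing R]
    (Z : Matrix ι κ R) (a b : R) : (a • (Z * Zᵀ) + b • (1 : Matrix ι ι R)).IsSymm :=
  (IsSymm.smul (by rw [IsSymm, transpose_mul, transpose_transpose]) a).add (isSymm_one.smul b)

theorem Matrix.posDef_smul_mul_transpose_add_smul_one (Z : Matrix ι κ ℝ) {a b : ℝ}
    (ha : 0 ≤ a) (hb : 0 < b) : (a • (Z * Zᵀ) + b • (1 : Matrix ι ι ℝ)).PosDef := by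
  rw [add_comm, ← conjTranspose_eq_transpose_of_trivial]
  exact (PosDef.one.smul hb).add_posSemidef ((posSemidef_self_mul_conjTranspose Z).smul ha)

end NestedErrorCovariance

theorem Finset.sum_filter_sigma_fst_eq {κ M : Type*} {α : κ → Type*} [Fintype κ] [DecidableEq κ]
    [∀ a, Fintype (α a)] [AddCommMonoid M] (f : Sigma α → M) (d : κ) :
    ∑ k with k.1 = d, f k = ∑ b, f ⟨d, b⟩ := by
  rw [Finset.sum_filter, Fintype.sum_sigma, Fintype.sum_eq_single d fun a ha ↦ by simp [ha]]
  simp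

theorem Finset.card_filter_sigma_fst_eq {κ : Type*} {α : κ → Type*} [Fintype κ] [DecidableEq κ]
    [∀ a, Fintype (α a)] (d : κ) : #{k : Sigma α | k.1 = d} = Fintype.card (α d) := by
  rw [card_eq_sum_ones, sum_filter_sigma_fst_eq]
  simp

section IncidenceMatrix

variable {ι κ R : Type*} [Fintype κ] [DecidableEq κ] [CommRing R] {g : ι → κ} {Z : Matrix ι κ R}

theorem Matrix.mulVec_single_one_of_incidence (hZ : ∀ k d, Z k d = if g k = d then 1 else 0)
    (d : κ) : Z *ᵥ Pi.single d 1 = fun k ↦ if g k = d then 1 else 0 := by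
  ext k
  simp [hZ]

omit [Fintype κ] in
theorem Matrix.row_eq_single_of_incidence (hZ : ∀ k d, Z k d = if g k = d then 1 else 0)
    (k : ι) : Z k = Pi.single (g k) 1 := by
  ext d
  simp [hZ, Pi.single_apply, eq_comm]

theorem Matrix.mul_transpose_apply_self_of_incidence
    (hZ : ∀ k d, Z k d = if g k = d then 1 else 0) (k : ι) : (Z * Zᵀ) k k = 1 := by
  simp [mul_apply, hZ]

variable [Fintype ι]

theorem Matrix.transpose_mulVec_mulVec_single_one_of_incidence {p : Type*}
    (hZ : ∀ k d, Z k d = if g k = d then 1 else 0) (X : Matrix ι p R) (d : κ) :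
    Xᵀ *ᵥ (Z *ᵥ Pi.single d 1) = ∑ k with g k = d, X k := by
  rw [mulVec_single_one_of_incidence hZ]
  ext j
  simp only [mulVec, dotProduct, transpose_apply, mul_ite, mul_one, mul_zero]
  rw [← Finset.sum_filter]
  exact (Finset.sum_apply j _ _).symm

theorem Matrix.mul_transpose_mulVec_mulVec_single_one_of_incidence
    (hZ : ∀ k d, Z k d = if g k = d then 1 else 0) (d : κ) :
    (Z * Zᵀ) *ᵥ (Z *ᵥ Pi.single d 1) = (#{k | g k = d} : R) • Z *ᵥ Pi.single d 1 := by
  have hZtu : Zᵀ *ᵥ (Z *ᵥ Pi.single d 1) = (#{k | g k = d} : R) • Pi.single d 1 := by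
    rw [transpose_mulVec_mulVec_single_one_of_incidence hZ, Finset.sum_congr rfl fun k hk ↦ by
      rw [row_eq_single_of_incidence hZ, (Finset.mem_filter.mp hk).2], Finset.sum_const,
      Nat.cast_smul_eq_nsmul]
  rw [← mulVec_mulVec, hZtu, mulVec_smul]

theorem Matrix.smul_mul_transpose_add_smul_one_mulVec_of_incidence [DecidableEq ι]
    (hZ : ∀ k d, Z k d = if g k = d then 1 else 0) (a b : R) (d : κ) :
    (a • (Z * Zᵀ) + b • (1 : Matrix ι ι R)) *ᵥ (Z *ᵥ Pi.single d 1)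
      = (a * #{k | g k = d} + b) • Z *ᵥ Pi.single d 1 := by
  rw [add_mulVec, smul_mulVec, smul_mulVec, one_mulVec,
    mul_transpose_mulVec_mulVec_single_one_of_incidence hZ, smul_smul, ← add_smul]

end IncidenceMatrix

theorem quadratic_forms_a_and_bVa_general
    (D p : ℕ) (nds : Fin D → ℕ) (hnds : ∀ d, 1 ≤ nds d)
    (σu2 σe2 : ℝ) (hσu : 0 ≤ σu2) (hσe : 0 < σe2)
    (Xs : Matrix ((d : Fin D) × Fin (nds d)) (Fin p) ℝ)
    (Zs : Matrix ((d : Fin D) × Fin (nds d)) (Fin D) ℝ)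
    (hZs : ∀ k d', Zs k d' = if k.1 = d' then 1 else 0)
    (Vs : Matrix ((d : Fin D) × Fin (nds d)) ((d : Fin D) × Fin (nds d)) ℝ)
    (hVs : Vs = σu2 • (Zs * Zsᵀ) + σe2 • (1 : Matrix _ _ ℝ))
    (Qs : Matrix (Fin p) (Fin p) ℝ) (hQs : Qs = (Xsᵀ * Vs⁻¹ * Xs)⁻¹)
    (Ps : Matrix ((d : Fin D) × Fin (nds d)) ((d : Fin D) × Fin (nds d)) ℝ)
    (hPs : Ps = Vs⁻¹ - Vs⁻¹ * Xs * Qs * Xsᵀ * Vs⁻¹)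
    (d : Fin D) (i : Fin (nds d)) (xdj : Fin p → ℝ)
    (γd : ℝ) (hγ : γd = σu2 / (σu2 + σe2 / (nds d : ℝ)))
    (xbar : Fin p → ℝ)
    (hxbar : xbar = ((nds d : ℝ))⁻¹ • ∑ k : Fin (nds d), Xs ⟨d, k⟩)
    (adi : (d : Fin D) × Fin (nds d) → ℝ)
    (hadi : adi = Pi.single (⟨d, i⟩ : (d : Fin D) × Fin (nds d)) (1 : ℝ))
    (bdj : (d : Fin D) × Fin (nds d) → ℝ)
    (hbdj : bdj = (Vs⁻¹ * Xs * Qs).mulVec xdj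
        + σu2 • Ps.mulVec (Zs.mulVec (Pi.single d 1))) :
    adi ⬝ᵥ Vs.mulVec adi = σu2 + σe2
    ∧ bdj ⬝ᵥ Vs.mulVec adi = σu2 + (xdj - γd • xbar) ⬝ᵥ Qs.mulVec (Xs ⟨d, i⟩) := by
  subst hVs hQs hPs hadi hbdj hγ
  set V := σu2 • (Zs * Zsᵀ) + σe2 • (1 : Matrix _ _ ℝ)
  set u := Zs *ᵥ Pi.single d 1
  have hn : (nds d : ℝ) ≠ 0 := by have := hnds d; positivity
  have hc : σu2 * nds d + σe2 ≠ 0 := by positivity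
  have hV : V.IsSymm := isSymm_smul_mul_transpose_add_smul_one Zs σu2 σe2
  have hdet : IsUnit V.det :=
    isUnit_iff_ne_zero.mpr (posDef_smul_mul_transpose_add_smul_one Zs hσu hσe).det_pos.ne'
  have hQ : (Xsᵀ * V⁻¹ * Xs)⁻¹.IsSymm := (hV.inv.transpose_mul_mul Xs).inv
  have hVu : V *ᵥ u = (σu2 * nds d + σe2) • u := by
    rw [smul_mul_transpose_add_smul_one_mulVec_of_incidence hZs, card_filter_sigma_fst_eq,
      Fintype.card_fin]
  have hXu : Xsᵀ *ᵥ u = (nds d : ℝ) • xbar := by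
    rw [transpose_mulVec_mulVec_single_one_of_incidence hZs, hxbar, smul_inv_smul₀ hn]
    exact sum_filter_sigma_fst_eq _ d
  have hXa : Xsᵀ *ᵥ Pi.single ⟨d, i⟩ 1 = Xs ⟨d, i⟩ := by rw [mulVec_single_one]; rfl
  have hua : u ⬝ᵥ Pi.single ⟨d, i⟩ 1 = 1 := by simp [u, mulVec_single_one_of_incidence hZs]
  constructor
  · simp [V, mul_transpose_apply_self_of_incidence hZs]
  · rw [add_dotProduct, smul_dotProduct, hV.gls_mulVec_dotProduct_mulVec hdet Xs hQ,
      hV.gls_projection_mulVec_dotProduct_mulVec hdet Xs hQ,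
      inv_mulVec_eq_inv_smul_of_mulVec_eq_smul hdet hc hVu, mulVec_smul, hXu, hXa, hua,
      sub_dotProduct, smul_dotProduct, smul_dotProduct, smul_dotProduct]
    field_simp
    ring

/-- In the multi-area nested-error matrix model, for a sampled unit `i` of area `d` with
indicator vector `a_{di}` and any `x_{dj}`: (1) `a_{di}' V_s a_{di} = σu² + σe²`;
(2) `b_{dj}' V_s a_{di} = σu² + (x_{dj} − γ_d x̄_{ds})' Q_s x_{di}`. -/
theorem quadratic_forms_a_and_bVa
    (D p : ℕ) (hD : 0 < D) (nds : Fin D → ℕ) (hnds : ∀ d, 1 ≤ nds d)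
    (σu2 σe2 : ℝ) (hσu : 0 ≤ σu2) (hσe : 0 < σe2)
    (Xs : Matrix ((d : Fin D) × Fin (nds d)) (Fin p) ℝ)
    (Zs : Matrix ((d : Fin D) × Fin (nds d)) (Fin D) ℝ)
    (hZs : ∀ k d', Zs k d' = if k.1 = d' then 1 else 0)
    (Vs : Matrix ((d : Fin D) × Fin (nds d)) ((d : Fin D) × Fin (nds d)) ℝ)
    (hVs : Vs = σu2 • (Zs * Zsᵀ) + σe2 • (1 : Matrix _ _ ℝ))
    (hXVX : IsUnit (Xsᵀ * Vs⁻¹ * Xs))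
    (Qs : Matrix (Fin p) (Fin p) ℝ) (hQs : Qs = (Xsᵀ * Vs⁻¹ * Xs)⁻¹)
    (Ps : Matrix ((d : Fin D) × Fin (nds d)) ((d : Fin D) × Fin (nds d)) ℝ)
    (hPs : Ps = Vs⁻¹ - Vs⁻¹ * Xs * Qs * Xsᵀ * Vs⁻¹)
    (d : Fin D) (i : Fin (nds d)) (xdj : Fin p → ℝ)
    (γd : ℝ) (hγ : γd = σu2 / (σu2 + σe2 / (nds d : ℝ)))
    (xbar : Fin p → ℝ)
    (hxbar : xbar = ((nds d : ℝ))⁻¹ • ∑ k : Fin (nds d), Xs ⟨d, k⟩)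
    (adi : (d : Fin D) × Fin (nds d) → ℝ)
    (hadi : adi = Pi.single (⟨d, i⟩ : (d : Fin D) × Fin (nds d)) (1 : ℝ))
    (bdj : (d : Fin D) × Fin (nds d) → ℝ)
    (hbdj : bdj = (Vs⁻¹ * Xs * Qs).mulVec xdj
        + σu2 • Ps.mulVec (Zs.mulVec (Pi.single d 1))) :
    adi ⬝ᵥ Vs.mulVec adi = σu2 + σe2
    ∧ bdj ⬝ᵥ Vs.mulVec adi = σu2 + (xdj - γd • xbar) ⬝ᵥ Qs.mulVec (Xs ⟨d, i⟩) :=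
  quadratic_forms_a_and_bVa_general D p nds hnds σu2 σe2 hσu hσe Xs Zs hZs Vs hVs Qs hQs Ps hPs d i
    xdj γd hγ xbar hxbar adi hadi bdj hbdj
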